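/- Let θᵢ = e^{(lᵢ − lⱼ − lₖ)/2}, xᵢ = (θⱼ+θₖ−θᵢ)/2, uᵢ = ∫₀^{lᵢ} e^{−h e^{−t}} dt, and μ(x) = ∫₀^{x} e^{h t²} dt. Then the matrix H = [∂μ(xᵢ)/∂uⱼ] is negative definite at every point, and hence the function F_h with ∇F_h = (μ(x₁),μ(x₂),μ(x₃)) in the u-variables is strictly concave on its convex domain. -/

import Mathlib

/-- The generalized angle opposite the `i`-th edge: `θᵢ = exp((lᵢ - lⱼ - lₖ)/2)`. -/
noncomputable def thetaF (l : Fin 3 → ℝ) (i : Fin 3) : ℝ :=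
  Real.exp (l i - (l 0 + l 1 + l 2) / 2)

/-- The x-invariant `xᵢ = (θⱼ + θₖ - θᵢ)/2`. -/
noncomputable def xF (l : Fin 3 → ℝ) (i : Fin 3) : ℝ :=
  (thetaF l 0 + thetaF l 1 + thetaF l 2) / 2 - thetaF l i

/-- `μ(x) = ∫₀ˣ e^{h t²} dt`. -/
noncomputable def mu (h x : ℝ) : ℝ := ∫ t in (0:ℝ)..x, Real.exp (h * t ^ 2)

/-- The change of variables `uᵢ = ∫₀^{lᵢ} e^{-h e^{-t}} dt`. -/
noncomputable def uF (h : ℝ) (l : Fin 3 → ℝ) : Fin 3 → ℝ :=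
  fun i => ∫ t in (0:ℝ)..(l i), Real.exp (-h * Real.exp (-t))

/-- The matrix `H = [∂μ(xᵢ)/∂uⱼ]` expressed via the chain rule, using
`duⱼ/dlⱼ = e^{-h e^{-lⱼ}}`. -/
noncomputable def Hmat (h : ℝ) (l : Fin 3 → ℝ) (i j : Fin 3) : ℝ :=
  deriv (fun s => mu h (xF (Function.update l j s) i)) (l j) /
    Real.exp (-h * Real.exp (-l j))

/-!
Writing `Dᵢ = exp (h xᵢ²)`, the chain rule gives `H = c • D (∂x/∂l) D` with a constant `c > 0`:
the factor `exp (h e^{-lⱼ})` contributed by `∂lⱼ/∂uⱼ` splits as `Dⱼ` times a constant because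
`e^{-lⱼ} = θᵢθₖ = xⱼ² + (x₀x₁ + x₀x₂ + x₁x₂)`. The symmetric matrix `∂x/∂l` has quadratic form
`-(Σᵢ θᵢ (wⱼ + wₖ - wᵢ)²) / 4`, negative definite since `θᵢ > 0`. For strict concavity, restrict
`F` to a segment of the convex domain `range u = Πᵢ range uᵢ`: pulled back through the inverse of
`l ↦ u`, its second derivative along the segment is the quadratic form of `H`.
-/

open Real Function Set

theorem strictConcaveOn_of_hasDerivAt2_neg {D : Set ℝ} (hD : Convex ℝ D) {f f' f'' : ℝ → ℝ}
    (hf : ∀ x ∈ D, HasDerivAt f (f' x) x) (hf' : ∀ x ∈ D, HasDerivAt f' (f'' x) x)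
    (hf'' : ∀ x ∈ interior D, f'' x < 0) : StrictConcaveOn ℝ D f := by
  have hf'_anti : StrictAntiOn f' (interior D) := by
    refine strictAntiOn_of_deriv_neg hD.interior
      (fun x hx => (hf' x (interior_subset hx)).continuousAt.continuousWithinAt) fun x hx => ?_
    rw [interior_interior] at hx
    rw [(hf' x (interior_subset hx)).deriv]
    exact hf'' x hx
  refine StrictAntiOn.strictConcaveOn_of_deriv hD
    (fun x hx => (hf x hx).continuousAt.continuousWithinAt) fun x hx y hy hxy => ?_
  rw [(hf x (interior_subset hx)).deriv, (hf y (interior_subset hy)).deriv]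
  exact hf'_anti hx hy hxy

theorem strictConcaveOn_of_segment {E β : Type*} [AddCommGroup E] [Module ℝ E]
    [AddCommMonoid β] [PartialOrder β] [Module ℝ β] {s : Set E} {f : E → β} (hs : Convex ℝ s)
    (hf : ∀ p ∈ s, ∀ q ∈ s, p ≠ q → StrictConcaveOn ℝ (Icc 0 1) fun t : ℝ => f (p + t • (q - p))) :
    StrictConcaveOn ℝ s f := by
  refine ⟨hs, fun p hp q hq hpq a b ha hb hab => ?_⟩
  have key := (hf p hp q hq hpq).2 (left_mem_Icc.2 zero_le_one) (right_mem_Icc.2 zero_le_one)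
    zero_ne_one ha hb hab
  have hseg : a • p + b • q = p + b • (q - p) := by
    rw [eq_sub_of_add_eq hab]; module
  simpa [hseg] using key

theorem hasDerivAt_invFun_of_pos {f f' : ℝ → ℝ} (hf : ∀ x, HasStrictDerivAt f (f' x) x)
    (hf' : ∀ x, 0 < f' x) {y : ℝ} (hy : y ∈ range f) :
    HasDerivAt (invFun f) (f' (invFun f y))⁻¹ y := by
  have hmono : StrictMono f := strictMono_of_hasDerivAt_pos (fun x => (hf x).hasDerivAt) hf'
  have hopen : IsOpen (range f) :=
    (isOpenMap_of_hasStrictDerivAt hf fun x => (hf' x).ne').isOpen_range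
  have hinv : ∀ x, invFun f (f x) = x := leftInverse_invFun hmono.injective
  have hcont : ContinuousAt (invFun f) y := by
    refine continuousAt_of_monotoneOn_of_image_mem_nhds (s := range f) ?_ (hopen.mem_nhds hy)
      (Filter.mem_of_superset Filter.univ_mem fun x _ => ⟨f x, mem_range_self x, hinv x⟩)
    rintro _ ⟨a, rfl⟩ _ ⟨b, rfl⟩ hab
    rw [hinv, hinv]
    exact hmono.le_iff_le.1 hab
  exact (hf _).hasDerivAt.of_local_left_inverse hcont (hf' _).ne'
    (Filter.mem_of_superset (hopen.mem_nhds hy) fun z hz => invFun_eq hz)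

/-- `∂xᵢ/∂lⱼ`: it equals `xₖ/2` off the diagonal and `-(x₀ + x₁ + x₂)/2` on it. -/
noncomputable def dxdl (l : Fin 3 → ℝ) (i j : Fin 3) : ℝ :=
  (thetaF l i + thetaF l j - (thetaF l 0 + thetaF l 1 + thetaF l 2) / 2) / 2 -
    if i = j then thetaF l i else 0

section Derivatives

variable {ℓ : ℝ → Fin 3 → ℝ} {ℓ' : Fin 3 → ℝ} {t : ℝ}

theorem hasDerivAt_thetaF_comp (hℓ : ∀ j, HasDerivAt (fun s => ℓ s j) (ℓ' j) t) (k : Fin 3) :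
    HasDerivAt (fun s => thetaF (ℓ s) k)
      ((ℓ' k - (ℓ' 0 + ℓ' 1 + ℓ' 2) / 2) * thetaF (ℓ t) k) t := by
  simpa only [thetaF, mul_comm] using
    ((hℓ k).fun_sub ((((hℓ 0).fun_add (hℓ 1)).fun_add (hℓ 2)).div_const 2)).exp

theorem hasDerivAt_xF_comp (hℓ : ∀ j, HasDerivAt (fun s => ℓ s j) (ℓ' j) t) (i : Fin 3) :
    HasDerivAt (fun s => xF (ℓ s) i) (∑ j, dxdl (ℓ t) i j * ℓ' j) t := by
  have hθ := hasDerivAt_thetaF_comp hℓ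
  refine ((((hθ 0).fun_add (hθ 1)).fun_add (hθ 2)).div_const 2 |>.fun_sub (hθ i)).congr_deriv ?_
  fin_cases i <;>
    simp only [dxdl, Fin.sum_univ_three, Fin.isValue, Fin.zero_eta, Fin.mk_one, Fin.reduceFinMk,
      Fin.reduceEq, ↓reduceIte, zero_ne_one, one_ne_zero, sub_zero] <;> ring

theorem hasDerivAt_mu (h x : ℝ) : HasDerivAt (mu h) (exp (h * x ^ 2)) x :=
  ((by fun_prop : Continuous fun t : ℝ => exp (h * t ^ 2)).integral_hasStrictDerivAt 0 x).hasDerivAt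

theorem hasDerivAt_mu_xF_comp (h : ℝ) (hℓ : ∀ j, HasDerivAt (fun s => ℓ s j) (ℓ' j) t)
    (i : Fin 3) :
    HasDerivAt (fun s => mu h (xF (ℓ s) i))
      (exp (h * xF (ℓ t) i ^ 2) * ∑ j, dxdl (ℓ t) i j * ℓ' j) t :=
  (hasDerivAt_mu h _).comp t (hasDerivAt_xF_comp hℓ i)

end Derivatives

theorem Hmat_eq (h : ℝ) (l : Fin 3 → ℝ) (i j : Fin 3) :
    Hmat h l i j = exp (h * xF l i ^ 2) * dxdl l i j / exp (-h * exp (-l j)) := by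
  have hd := hasDerivAt_mu_xF_comp h (fun k => hasDerivAt_pi.1 (hasDerivAt_update l j (l j)) k) i
  rw [update_eq_self] at hd
  rw [Hmat, hd.deriv]
  simp [Pi.single_apply]

theorem exp_neg_eq_sq_xF_add (l : Fin 3 → ℝ) (i : Fin 3) :
    exp (-l i) = xF l i ^ 2 + (xF l 0 * xF l 1 + xF l 0 * xF l 2 + xF l 1 * xF l 2) := by
  have hθ : ∀ j k, thetaF l j * thetaF l k = exp (l j + l k - (l 0 + l 1 + l 2)) := by
    intro j k; rw [thetaF, thetaF, ← exp_add]; ring_nf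
  have e0 : exp (-l 0) = thetaF l 1 * thetaF l 2 := by rw [hθ]; ring_nf
  have e1 : exp (-l 1) = thetaF l 0 * thetaF l 2 := by rw [hθ]; ring_nf
  have e2 : exp (-l 2) = thetaF l 0 * thetaF l 1 := by rw [hθ]; ring_nf
  fin_cases i <;>
    simp only [xF, e0, e1, e2, Fin.isValue, Fin.zero_eta, Fin.mk_one, Fin.reduceFinMk] <;> ring

theorem Hmat_eq_mul (h : ℝ) (l : Fin 3 → ℝ) (i j : Fin 3) :
    Hmat h l i j = exp (h * (xF l 0 * xF l 1 + xF l 0 * xF l 2 + xF l 1 * xF l 2)) *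
      (exp (h * xF l i ^ 2) * dxdl l i j * exp (h * xF l j ^ 2)) := by
  rw [Hmat_eq, div_eq_mul_inv, ← exp_neg, exp_neg_eq_sq_xF_add l j, ← neg_mul, neg_neg, mul_add,
    exp_add]
  ring

theorem sum_dxdl_quadForm (l w : Fin 3 → ℝ) :
    ∑ i, ∑ j, w i * dxdl l i j * w j =
      -(thetaF l 0 * (w 1 + w 2 - w 0) ^ 2 + thetaF l 1 * (w 0 + w 2 - w 1) ^ 2 +
        thetaF l 2 * (w 0 + w 1 - w 2) ^ 2) / 4 := by
  simp only [dxdl, Fin.sum_univ_three, ↓reduceIte, Fin.reduceEq, zero_ne_one, one_ne_zero, sub_zero]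
  ring

theorem dxdl_quadForm_neg (l : Fin 3 → ℝ) {w : Fin 3 → ℝ} (hw : w ≠ 0) :
    ∑ i, ∑ j, w i * dxdl l i j * w j < 0 := by
  rw [sum_dxdl_quadForm]
  have hθ : ∀ k, 0 < thetaF l k := fun k => exp_pos _
  have hnn : ∀ k (x : ℝ), 0 ≤ thetaF l k * x ^ 2 := fun k x => by have := hθ k; positivity
  have h0 := hnn 0 (w 1 + w 2 - w 0)
  have h1 := hnn 1 (w 0 + w 2 - w 1)
  have h2 := hnn 2 (w 0 + w 1 - w 2)
  suffices w 1 + w 2 - w 0 ≠ 0 ∨ w 0 + w 2 - w 1 ≠ 0 ∨ w 0 + w 1 - w 2 ≠ 0 by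
    rcases this with h | h | h
    · linarith [mul_pos (hθ 0) (sq_pos_of_ne_zero h)]
    · linarith [mul_pos (hθ 1) (sq_pos_of_ne_zero h)]
    · linarith [mul_pos (hθ 2) (sq_pos_of_ne_zero h)]
  contrapose! hw
  obtain ⟨h0, h1, h2⟩ := hw
  ext k
  fin_cases k <;>
    simp only [Fin.isValue, Fin.zero_eta, Fin.mk_one, Fin.reduceFinMk, Pi.zero_apply] <;> linarith

theorem Hmat_quadForm_neg (h : ℝ) (l : Fin 3 → ℝ) {v : Fin 3 → ℝ} (hv : v ≠ 0) :
    ∑ i, ∑ j, v i * Hmat h l i j * v j < 0 := by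
  set w : Fin 3 → ℝ := fun i => exp (h * xF l i ^ 2) * v i
  have hw : w ≠ 0 := by
    contrapose! hv
    ext i
    simpa [w, (exp_pos _).ne'] using congrFun hv i
  have hfactor : ∑ i, ∑ j, v i * Hmat h l i j * v j =
      exp (h * (xF l 0 * xF l 1 + xF l 0 * xF l 2 + xF l 1 * xF l 2)) *
        ∑ i, ∑ j, w i * dxdl l i j * w j := by
    simp only [Hmat_eq_mul, Fin.sum_univ_three, w]
    ring
  rw [hfactor]
  exact mul_neg_of_pos_of_neg (exp_pos _) (dxdl_quadForm_neg l hw)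

noncomputable def uCoord (h x : ℝ) : ℝ := ∫ t in (0:ℝ)..x, exp (-h * exp (-t))

theorem hasStrictDerivAt_uCoord (h x : ℝ) :
    HasStrictDerivAt (uCoord h) (exp (-h * exp (-x))) x :=
  (by fun_prop : Continuous fun t : ℝ => exp (-h * exp (-t))).integral_hasStrictDerivAt 0 x

theorem range_uF (h : ℝ) : range (uF h) = univ.pi fun _ => range (uCoord h) := by
  ext y
  constructor
  · rintro ⟨l, rfl⟩ j _
    exact ⟨l j, rfl⟩
  · intro hy
    choose l hl using fun j => hy j (mem_univ j)
    exact ⟨l, funext hl⟩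

theorem convex_range_uF (h : ℝ) : Convex ℝ (range (uF h)) := by
  rw [range_uF]
  have hcont : Continuous (uCoord h) := continuous_iff_continuousAt.2 fun x =>
    (hasStrictDerivAt_uCoord h x).hasDerivAt.continuousAt
  exact convex_pi fun _ _ => (isPreconnected_range hcont).ordConnected.convex

theorem hasDerivAt_mu_xF_comp_invFun_uCoord (h : ℝ) {y : ℝ → Fin 3 → ℝ} {d : Fin 3 → ℝ}
    {t : ℝ} (hy : ∀ j, HasDerivAt (fun s => y s j) (d j) t) (hyt : y t ∈ range (uF h))
    (i : Fin 3) :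
    HasDerivAt (fun s => mu h (xF (fun j => invFun (uCoord h) (y s j)) i))
      (∑ j, Hmat h (fun j => invFun (uCoord h) (y t j)) i j * d j) t := by
  have hℓ : ∀ j, HasDerivAt (fun s => invFun (uCoord h) (y s j))
      (d j / exp (-h * exp (-invFun (uCoord h) (y t j)))) t := fun j => by
    have hmem : y t j ∈ range (uCoord h) := by
      rw [range_uF] at hyt; exact hyt j (mem_univ j)
    rw [div_eq_inv_mul]
    exact (hasDerivAt_invFun_of_pos (hasStrictDerivAt_uCoord h) (fun _ => exp_pos _) hmem).comp t
      (hy j)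
  refine (hasDerivAt_mu_xF_comp h hℓ i).congr_deriv ?_
  simp only [Hmat_eq, Finset.mul_sum]
  congr 1; ext j; ring

theorem strictConcaveOn_range_uF (h : ℝ) {F : (Fin 3 → ℝ) → ℝ}
    (hF : ∀ l : Fin 3 → ℝ, HasFDerivAt F
      (∑ i : Fin 3, mu h (xF l i) • (ContinuousLinearMap.proj i : (Fin 3 → ℝ) →L[ℝ] ℝ))
      (uF h l)) :
    StrictConcaveOn ℝ (range (uF h)) F := by
  refine strictConcaveOn_of_segment (convex_range_uF h) fun p hp q hq hpq => ?_
  set y : ℝ → Fin 3 → ℝ := fun t => p + t • (q - p)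
  set ℓ : ℝ → Fin 3 → ℝ := fun t j => invFun (uCoord h) (y t j)
  have hy : ∀ t, HasDerivAt y (q - p) t := fun t =>
    (((hasDerivAt_id t).smul_const (q - p)).const_add p).congr_deriv (one_smul ℝ _)
  have hyt : ∀ t ∈ Icc (0 : ℝ) 1, y t ∈ range (uF h) := fun t ht => by
    simpa [y] using (convex_range_uF h).add_smul_sub_mem hp hq ht
  have huℓ : ∀ t ∈ Icc (0 : ℝ) 1, uF h (ℓ t) = y t := fun t ht => by
    rw [range_uF] at hyt
    funext j
    exact invFun_eq (hyt t ht j (mem_univ j))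
  refine strictConcaveOn_of_hasDerivAt2_neg (convex_Icc 0 1)
    (f' := fun t => ∑ i, mu h (xF (ℓ t) i) * (q - p) i)
    (f'' := fun t => ∑ i, ∑ j, (q - p) i * Hmat h (ℓ t) i j * (q - p) j) ?_ ?_ ?_
  · intro t ht
    have hFt := hF (ℓ t)
    rw [huℓ t ht] at hFt
    exact (hFt.comp_hasDerivAt t (hy t)).congr_deriv (by simp)
  · intro t ht
    have hμ := hasDerivAt_mu_xF_comp_invFun_uCoord h (hasDerivAt_pi.1 (hy t)) (hyt t ht)
    refine (HasDerivAt.fun_sum fun i _ => (hμ i).mul_const ((q - p) i)).congr_deriv ?_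
    simp only [Finset.sum_mul]
    congr 1; ext i; congr 1; ext j; ring
  · intro t _
    exact Hmat_quadForm_neg h (ℓ t) (sub_ne_zero.2 hpq.symm)

theorem stmt10 (h : ℝ) :
    (∀ l : Fin 3 → ℝ, ∀ v : Fin 3 → ℝ, v ≠ 0 →
      ∑ i : Fin 3, ∑ j : Fin 3, v i * Hmat h l i j * v j < 0) ∧
    (∀ F : (Fin 3 → ℝ) → ℝ,
      (∀ l : Fin 3 → ℝ, HasFDerivAt F
        (∑ i : Fin 3, mu h (xF l i) •
          (ContinuousLinearMap.proj i : (Fin 3 → ℝ) →L[ℝ] ℝ)) (uF h l)) →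
      StrictConcaveOn ℝ (Set.range (uF h)) F) :=
  ⟨fun l _ hv => Hmat_quadForm_neg h l hv, fun _ hF => strictConcaveOn_range_uF h hF⟩
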